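/- Let K be a field, D ∈ K a non-square, m ∈ K, and n ≥ 1 a natural number. Then the n-th ⊙-power of m in P_K equals α if and only if B_n(D,m) = 0, and if B_n(D,m) ≠ 0 then the n-th ⊙-power of m equals the Rédei rational function value Q_n(D,m) = A_n(D,m)/B_n(D,m). -/
import Mathlib


/- The product `⊙` on the parameter set `P_K = K ∪ {α}`, realized as `Option K`
(`none` plays the role of `α`). -/
open Classical in
noncomputable def paraMul {K : Type*} [Field K] (D : K) : Option K → Option K → Option K
  | some a, some b => if a + b = 0 then none else some ((D + a * b) / (a + b))
  | none, x => x
  | some a, none => some a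

/-- `n`-th power with respect to `⊙` (identity `α = none`). -/
noncomputable def paraPow {K : Type*} [Field K] (D : K) (m : Option K) : ℕ → Option K
  | 0 => none
  | n + 1 => paraMul D m (paraPow D m n)

/-- The Rédei polynomials `(A_n(D,z), B_n(D,z))`, defined by `A_0 = 1`, `B_0 = 0`,
`A_{n+1} = z·A_n + D·B_n`, `B_{n+1} = A_n + z·B_n`. -/
def redei {R : Type*} [CommRing R] (D z : R) : ℕ → R × R
  | 0 => (1, 0)
  | n + 1 => (z * (redei D z n).1 + D * (redei D z n).2,
              (redei D z n).1 + z * (redei D z n).2)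

lemma redei_pell {R : Type*} [CommRing R] (D m : R) (n : ℕ) :
    (redei D m n).1 ^ 2 - D * (redei D m n).2 ^ 2 = (m ^ 2 - D) ^ n := by
  induction n with
  | zero => simp [redei]
  | succ n ih =>
    show (m * (redei D m n).1 + D * (redei D m n).2) ^ 2 -
        D * ((redei D m n).1 + m * (redei D m n).2) ^ 2 = (m ^ 2 - D) ^ (n + 1)
    rw [pow_succ]
    linear_combination (m ^ 2 - D) * ih

/-- For a field `K`, a non-square `D ∈ K`, `m ∈ K` and `n ≥ 1`:
`m^{⊙n} = α` iff `B_n(D,m) = 0`, and if `B_n(D,m) ≠ 0` then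
`m^{⊙n} = Q_n(D,m) = A_n(D,m)/B_n(D,m)`. -/
theorem paraPow_eq_redei {K : Type*} [Field K] (D : K) (hD : ∀ c : K, c ^ 2 ≠ D)
    (m : K) (n : ℕ) (hn : 1 ≤ n) :
    (paraPow D (some m) n = none ↔ (redei D m n).2 = 0) ∧
    ((redei D m n).2 ≠ 0 →
      paraPow D (some m) n = some ((redei D m n).1 / (redei D m n).2)) := by
  clear hn
  induction n with
  | zero => simp [paraPow, redei]
  | succ n ih =>
    have hΔ : m ^ 2 - D ≠ 0 := sub_ne_zero.mpr (hD m)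
    have hpell := redei_pell D m n
    set A := (redei D m n).1 with hA
    set B := (redei D m n).2 with hBdef
    have hred1 : (redei D m (n + 1)).1 = m * A + D * B := rfl
    have hred2 : (redei D m (n + 1)).2 = A + m * B := rfl
    by_cases hB0 : B = 0
    · have hA0 : A ≠ 0 := by
        intro h
        rw [h, hB0] at hpell
        simp at hpell
        exact pow_ne_zero n hΔ hpell.symm
      have hp : paraPow D (some m) n = none := ih.1.mpr hB0
      have hval : paraPow D (some m) (n + 1) = some m := by
        simp [paraPow, hp, paraMul]
      constructor
      · rw [hval, hred2, hB0]
        simp [hA0]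
      · intro _
        rw [hval, hred1, hred2, hB0]
        simp [hA0, mul_div_assoc]
    · have hp := ih.2 hB0
      have hstep : paraPow D (some m) (n + 1) = paraMul D (some m) (some (A / B)) := by
        simp [paraPow, hp]
      by_cases hS : A + m * B = 0
      · have hz : m + A / B = 0 := by
          field_simp
          linear_combination hS
        have hval : paraPow D (some m) (n + 1) = none := by
          rw [hstep]; simp [paraMul, hz]
        constructor
        · rw [hval, hred2]; simp [hS]
        · intro h; rw [hred2] at h; exact absurd hS h
      · have hz : m + A / B ≠ 0 := by
          intro h
          apply hS
          field_simp at h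
          linear_combination h
        have hval : paraPow D (some m) (n + 1) =
            some ((D + m * (A / B)) / (m + A / B)) := by
          rw [hstep]; simp [paraMul, hz]
        have heq : (D + m * (A / B)) / (m + A / B) = (m * A + D * B) / (A + m * B) := by
          rw [div_eq_div_iff hz (by rwa [add_comm] at hS ⊢)]
          field_simp
          ring
        constructor
        · rw [hval, hred2]
          simp [hS]
        · intro _
          rw [hval, hred1, hred2, heq]
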